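/- arXiv:0909.1434 — 2 statements merged into one kernel-verified Lean document; each statement's English description precedes it below -/
import Mathlib

section
/- Let F(r) be the free group on generators x_1,…,x_r, and let E : F(r) → ℤ⟨⟨X_1,…,X_r⟩⟩ be the Magnus expansion, i.e., the ring-homomorphism-induced map sending x_i ↦ 1 + X_i and x_i^{-1} ↦ 1 - X_i + X_i^2 - X_i^3 + ⋯ into the ring of formal power series in non-commuting variables X_1,…,X_r. Then an element w ∈ F(r) is the identity if and only if E(w) = 1. -/
open scoped BigOperators

/-- Convolution (Cauchy) product of coefficient functions of noncommutative
formal power series, indexed by words. -/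
def conv {σ : Type*} (f g : List σ → ℤ) : List σ → ℤ :=
  fun w => ∑ i ∈ Finset.range (w.length + 1), f (w.take i) * g (w.drop i)

/-- The power series `1`. -/
def oneSeries {σ : Type*} [DecidableEq σ] : List σ → ℤ := fun w => if w = [] then 1 else 0

/-- Magnus series of a single generator (`b = true`: `1 + X_i`) or its inverse
(`b = false`: `1 - X_i + X_i^2 - ⋯`). -/
def genSeries {σ : Type*} [DecidableEq σ] (i : σ) (b : Bool) : List σ → ℤ :=
  fun w =>
    if w = List.replicate w.length i then
      (if b then (if w.length ≤ 1 then 1 else 0) else (-1) ^ w.length)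
    else 0

/-- The Magnus expansion of an element of the free group, as the coefficient
function of a noncommutative formal power series. -/
def magnus {σ : Type*} [DecidableEq σ] (w : FreeGroup σ) : List σ → ℤ :=
  (w.toWord.map fun p => genSeries p.1 p.2).foldr conv oneSeries

/-!
Let `w = x_{i₁}^{e₁} ⋯ x_{iₖ}^{eₖ}` be reduced, with `i_j ≠ i_{j+1}` and `e_j ≠ 0`. On words
without two equal adjacent letters, `E(x_i^{±1})` acts like `1 ± X_i`, so the coefficient of such
a word `u` in `E(w)` is a signed count of the ways to spell `u` along a subsequence of the letters
of `w`. For `u = X_{i₁} ⋯ X_{iₖ}` each way picks one letter from each block, and all picks carry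
the same sign, so the coefficient is `e₁ ⋯ eₖ ≠ 0`.
-/

namespace List

variable {α : Type*} (R : α → α → Prop) [DecidableRel R]

theorem head?_destutter' (a : α) (l : List α) : (l.destutter' R a).head? = some a := by
  induction l generalizing a with
  | nil => rfl
  | cons b l ih =>
    rw [destutter'_cons]
    split_ifs
    · rfl
    · exact ih a

theorem head?_destutter : ∀ l : List α, (l.destutter R).head? = l.head?
  | [] => rfl
  | a :: l => by rw [destutter_cons']; exact head?_destutter' R a l

end List

namespace Magnus

open List FreeGroup

variable {σ : Type*} [DecidableEq σ]

def letterSign (b : Bool) : ℤ := if b then 1 else -1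

theorem letterSign_mul_self (b : Bool) : letterSign b * letterSign b = 1 := by
  cases b <;> rfl

theorem genSeries_nil (i : σ) (b : Bool) : genSeries i b [] = 1 := by
  cases b <;> rfl

theorem genSeries_singleton (i : σ) (b : Bool) (j : σ) :
    genSeries i b [j] = if j = i then letterSign b else 0 := by
  by_cases h : j = i <;> cases b <;> simp [genSeries, letterSign, h]

theorem genSeries_cons_cons_of_ne (i : σ) (b : Bool) {x y : σ} (hxy : x ≠ y) (v : List σ) :
    genSeries i b (x :: y :: v) = 0 := by
  refine if_neg fun h => hxy ?_
  have := eq_replicate_iff.mp h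
  exact (this.2 x (by simp)).trans (this.2 y (by simp)).symm

theorem conv_genSeries_of_isChain (i : σ) (b : Bool) (f : List σ → ℤ) {u : List σ}
    (hu : u.IsChain (· ≠ ·)) :
    conv (genSeries i b) f u = f u + if u.head? = some i then letterSign b * f u.tail else 0 := by
  cases u with
  | nil => simp [conv, genSeries_nil]
  | cons x v =>
    have hlong : ∀ m ∈ Finset.range v.length,
        genSeries i b ((x :: v).take (m + 2)) * f ((x :: v).drop (m + 2)) = 0 := by
      intro m hm
      obtain ⟨y, v', rfl⟩ : ∃ y v', v = y :: v' := by
        cases v with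
        | nil => simp at hm
        | cons y v' => exact ⟨y, v', rfl⟩
      rw [take_succ_cons, take_succ_cons,
        genSeries_cons_cons_of_ne i b (isChain_cons_cons.mp hu).1, zero_mul]
    rw [conv, length_cons, Finset.sum_range_succ', Finset.sum_range_succ',
      Finset.sum_eq_zero hlong]
    by_cases h : x = i <;> simp [genSeries_nil, genSeries_singleton, h, add_comm]

def magnusOfWord (ℓ : List (σ × Bool)) : List σ → ℤ :=
  (ℓ.map fun p => genSeries p.1 p.2).foldr conv oneSeries

theorem magnusOfWord_nil : magnusOfWord ([] : List (σ × Bool)) = oneSeries := rfl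

theorem magnusOfWord_cons_of_isChain (i : σ) (b : Bool) (t : List (σ × Bool)) {u : List σ}
    (hu : u.IsChain (· ≠ ·)) :
    magnusOfWord ((i, b) :: t) u =
      magnusOfWord t u + if u.head? = some i then letterSign b * magnusOfWord t u.tail else 0 :=
  conv_genSeries_of_isChain i b _ hu

theorem magnusOfWord_eq_zero_of_not_sublist {ℓ : List (σ × Bool)} {u : List σ}
    (hu : u.IsChain (· ≠ ·)) (hsub : ¬u <+ ℓ.map Prod.fst) : magnusOfWord ℓ u = 0 := by
  induction ℓ generalizing u with
  | nil =>
    obtain ⟨x, v, rfl⟩ : ∃ x v, u = x :: v := by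
      cases u with
      | nil => exact absurd (nil_sublist _) hsub
      | cons x v => exact ⟨x, v, rfl⟩
    rfl
  | cons p t ih =>
    obtain ⟨i, b⟩ := p
    rw [magnusOfWord_cons_of_isChain i b t hu, ih hu fun h => hsub (h.cons _), zero_add]
    split_ifs with hhead
    · obtain ⟨v, rfl⟩ : ∃ v, u = i :: v := ⟨u.tail, (cons_head?_tail hhead).symm⟩
      rw [ih hu.tail fun h => hsub (h.cons_cons i), mul_zero]
    · rfl

def blockWord (ℓ : List (σ × Bool)) : List σ := (ℓ.map Prod.fst).destutter (· ≠ ·)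

theorem isChain_blockWord (ℓ : List (σ × Bool)) : (blockWord ℓ).IsChain (· ≠ ·) :=
  isChain_destutter _ _

theorem head?_blockWord (ℓ : List (σ × Bool)) : (blockWord ℓ).head? = (ℓ.map Prod.fst).head? :=
  head?_destutter _ _

theorem blockWord_cons_cons_self (i : σ) (b c : Bool) (t : List (σ × Bool)) :
    blockWord ((i, b) :: (i, c) :: t) = blockWord ((i, c) :: t) := by
  simp [blockWord, destutter_cons']

theorem blockWord_cons_cons_of_ne {i j : σ} (hij : i ≠ j) (b c : Bool) (t : List (σ × Bool)) :
    blockWord ((i, b) :: (j, c) :: t) = i :: blockWord ((j, c) :: t) := by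
  simp [blockWord, destutter_cons', hij]

/-- `i :: blockWord t` is stutter-free and longer than `blockWord t`, so it is no subsequence
of the generators of `t`. -/
theorem magnusOfWord_cons_blockWord {i : σ} {t : List (σ × Bool)}
    (hi : (blockWord t).head? ≠ some i) : magnusOfWord t (i :: blockWord t) = 0 := by
  have hchain : (i :: blockWord t).IsChain (· ≠ ·) :=
    isChain_cons.mpr ⟨fun y hy h => hi (h ▸ hy), isChain_blockWord t⟩
  refine magnusOfWord_eq_zero_of_not_sublist hchain fun hsub => ?_
  have := hchain.length_le_length_destutter_ne hsub
  simp [blockWord] at this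

theorem magnusOfWord_cons_of_isChain_cons (i : σ) (b : Bool) (t : List (σ × Bool))
    {r : List σ} (hr : (i :: r).IsChain (· ≠ ·)) :
    magnusOfWord ((i, b) :: t) r = magnusOfWord t r := by
  rw [magnusOfWord_cons_of_isChain i b t (isChain_cons.mp hr).2,
    if_neg (show ¬r.head? = some i from fun h => (isChain_cons.mp hr).1 i h rfl), add_zero]

/-- The first block multiplies the coefficient of the tail of the block word by its exponent,
which has the sign of the first letter. -/
theorem letterSign_mul_magnusOfWord_blockWord_pos {i : σ} {b : Bool} {t : List (σ × Bool)}
    (h : IsReduced ((i, b) :: t)) :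
    0 < letterSign b * magnusOfWord ((i, b) :: t) (blockWord ((i, b) :: t)) *
      magnusOfWord ((i, b) :: t) (blockWord ((i, b) :: t)).tail := by
  induction t generalizing i b with
  | nil =>
    simp [blockWord, magnusOfWord_cons_of_isChain, magnusOfWord_nil, oneSeries,
      letterSign_mul_self]
  | cons q t ih =>
    obtain ⟨j, c⟩ := q
    have ih := ih (isReduced_cons_cons.mp h).2
    by_cases hji : i = j
    · subst hji
      obtain rfl : b = c := (isReduced_cons_cons.mp h).1 rfl
      obtain ⟨r, hr⟩ : ∃ r, blockWord ((i, b) :: t) = i :: r :=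
        ⟨_, (cons_head?_tail (by simp [head?_blockWord])).symm⟩
      have hchain : (i :: r).IsChain (· ≠ ·) := hr ▸ isChain_blockWord _
      rw [hr] at ih
      rw [blockWord_cons_cons_self, hr, tail_cons,
        magnusOfWord_cons_of_isChain_cons _ _ _ hchain, magnusOfWord_cons_of_isChain _ _ _ hchain,
        head?_cons, if_pos rfl, tail_cons]
      set T := magnusOfWord ((i, b) :: t) r
      have hne : T ≠ 0 := right_ne_zero_of_mul ih.ne'
      calc (0 : ℤ) < letterSign b * magnusOfWord ((i, b) :: t) (i :: r) * T + T ^ 2 :=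
            add_pos ih (by positivity)
        _ = _ := by linear_combination (-T ^ 2) * letterSign_mul_self b
    · set X := magnusOfWord ((j, c) :: t) (blockWord ((j, c) :: t))
      have hne : X ≠ 0 := right_ne_zero_of_mul (left_ne_zero_of_mul ih.ne')
      have hchain : (i :: blockWord ((j, c) :: t)).IsChain (· ≠ ·) :=
        blockWord_cons_cons_of_ne hji b c t ▸ isChain_blockWord _
      have hhead : (blockWord ((j, c) :: t)).head? ≠ some i := by
        simp [head?_blockWord, Ne.symm hji]
      rw [blockWord_cons_cons_of_ne hji, tail_cons,
        magnusOfWord_cons_of_isChain_cons _ _ _ hchain,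
        magnusOfWord_cons_of_isChain _ _ _ hchain, head?_cons, if_pos rfl, tail_cons,
        magnusOfWord_cons_blockWord hhead, zero_add]
      calc (0 : ℤ) < X ^ 2 := by positivity
        _ = _ := by linear_combination (-X ^ 2) * letterSign_mul_self b

theorem magnusOfWord_blockWord_ne_zero {ℓ : List (σ × Bool)} (h : IsReduced ℓ) :
    magnusOfWord ℓ (blockWord ℓ) ≠ 0 := by
  match ℓ with
  | [] => exact one_ne_zero
  | (i, b) :: t =>
    exact right_ne_zero_of_mul (left_ne_zero_of_mul
      (letterSign_mul_magnusOfWord_blockWord_pos h).ne')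

end Magnus

/-- An element of the free group `F(r)` is trivial iff its Magnus expansion is `1`. -/
theorem magnus_eq_one_iff {r : ℕ} (w : FreeGroup (Fin r)) :
    w = 1 ↔ magnus w = oneSeries := by
  refine ⟨fun hw => by rw [hw, magnus, FreeGroup.toWord_one]; rfl, fun hE => ?_⟩
  by_contra hw
  have hblock : Magnus.blockWord w.toWord ≠ [] := by
    simpa [Magnus.blockWord] using (FreeGroup.toWord_eq_nil_iff (x := w)).not.mpr hw
  apply Magnus.magnusOfWord_blockWord_ne_zero (FreeGroup.isReduced_toWord (x := w))
  show magnus w (Magnus.blockWord w.toWord) = 0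
  rw [hE, oneSeries, if_neg hblock]
end

section
/- Let w = x_{i_1}^{p_1} ⋯ x_{i_s}^{p_s} be a freely reduced nonempty word in the free group F(r), where each p_j is a nonzero integer and consecutive indices satisfy i_k ≠ i_{k+1}. Then in the Magnus expansion E(w), the coefficient of the monomial X_{i_1} X_{i_2} ⋯ X_{i_s} is p_1 p_2 ⋯ p_s, which is nonzero; in particular E(w) ≠ 1. -/
/-!
If a word `w` has no two equal adjacent letters, then in `conv (genSeries i b) g` at `w` only the
constant and the linear term of `genSeries i b` contribute, since no prefix of `w` of length `≥ 2`
is a power of one letter. Hence a block `x ^ n` acts on the coefficient at `w` as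
`g w + n • [w starts with x] • g w.tail`. Peeling off the blocks of the reduced word
`x_{i_1}^{p_1} ⋯ x_{i_s}^{p_s}` one at a time, every term except `p_1 ⋯ p_s` asks for a coefficient
at a word longer than the number of remaining blocks, and such coefficients vanish.
-/

open scoped BigOperators

open FreeGroup List

lemma List.IsChain.head?_tail_ne {α : Type*} {w : List α} (hw : w.IsChain (· ≠ ·)) {x : α}
    (h : w.head? = some x) : w.tail.head? ≠ some x := by
  rcases w with _ | ⟨a, _ | ⟨c, t⟩⟩
  · simp at h
  · simp
  · simp only [head?_cons, Option.some.injEq, tail_cons] at h ⊢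
    subst h
    simpa using (isChain_cons_cons.mp hw).1.symm

section FreeGroupWords

variable {σ : Type*}

lemma of_zpow_eq_mk (x : σ) (n : ℤ) :
    of x ^ n = mk (replicate n.natAbs (x, decide (0 < n))) := by
  have of_pow (m : ℕ) : of x ^ m = mk (replicate m (x, true)) := by
    induction m with
    | zero => rfl
    | succ m ih => rw [pow_succ, ih, of, mul_mk, replicate_succ']
  obtain ⟨m, rfl | rfl⟩ := n.eq_nat_or_neg
  · rcases m.eq_zero_or_pos with rfl | hm
    · rfl
    · simp [of_pow, hm]
  · simp [of_pow, inv_mk, invRev, (Int.natCast_nonneg m).not_gt]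

def blocksWord (bs : List (σ × ℤ)) : List (σ × Bool) :=
  bs.flatMap fun a => replicate a.2.natAbs (a.1, decide (0 < a.2))

lemma prod_zpow_eq_mk_blocksWord (bs : List (σ × ℤ)) :
    (bs.map fun a => of a.1 ^ a.2).prod = mk (blocksWord bs) := by
  induction bs with
  | nil => rfl
  | cons a bs ih =>
    rw [map_cons, prod_cons, ih, of_zpow_eq_mk, mul_mk]
    rfl

lemma isReduced_blocksWord {bs : List (σ × ℤ)} (hn : ∀ a ∈ bs, a.2 ≠ 0)
    (hbs : (bs.map Prod.fst).IsChain (· ≠ ·)) : FreeGroup.IsReduced (blocksWord bs) := by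
  rw [FreeGroup.IsReduced, blocksWord, flatMap,
    isChain_flatten (by simpa using fun x hx => hn (x, 0) hx rfl), isChain_map]
  refine ⟨fun l hl => ?_, (isChain_map _).1 hbs |>.imp fun a b hab x hx y hy => ?_⟩
  · obtain ⟨a, -, rfl⟩ := mem_map.1 hl
    exact isChain_replicate_of_rel _ fun _ => rfl
  · rw [eq_of_mem_replicate (mem_of_mem_getLast? hx), eq_of_mem_replicate (mem_of_mem_head? hy)]
    exact fun h => absurd h hab

end FreeGroupWords

section Coefficients

variable {σ : Type*} [DecidableEq σ]

lemma genSeries_nil (i : σ) (b : Bool) : genSeries i b [] = 1 := by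
  simp [genSeries]

lemma genSeries_singleton (i : σ) (b : Bool) (a : σ) :
    genSeries i b [a] = if a = i then (if b then 1 else -1) else 0 := by
  by_cases h : a = i <;> cases b <;> simp [genSeries, h]

lemma genSeries_cons_cons_of_ne (i : σ) (b : Bool) {a c : σ} (hac : a ≠ c) (t : List σ) :
    genSeries i b (a :: c :: t) = 0 := by
  rw [genSeries, if_neg]
  simp only [length_cons, replicate_succ, cons.injEq]
  rintro ⟨rfl, rfl, -⟩
  exact hac rfl

lemma conv_genSeries_apply (i : σ) (b : Bool) (g : List σ → ℤ) {w : List σ}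
    (hw : w.IsChain (· ≠ ·)) :
    conv (genSeries i b) g w =
      g w + if w.head? = some i then (if b then 1 else -1) * g w.tail else 0 := by
  cases w with
  | nil => simp [conv, genSeries_nil]
  | cons a t =>
    rw [conv, length_cons, Finset.sum_range_succ', Finset.sum_range_succ', Finset.sum_eq_zero]
    · by_cases h : a = i <;> simp [genSeries_nil, genSeries_singleton, h, add_comm]
    · intro k hk
      obtain ⟨c, t', rfl⟩ :=
        exists_cons_of_length_pos (Finset.mem_range.mp hk |>.trans_le' k.zero_le)
      rw [take_succ_cons, take_succ_cons,
        genSeries_cons_cons_of_ne i b (isChain_cons_cons.mp hw).1, zero_mul]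

def wordSeries (L : List (σ × Bool)) : List σ → ℤ :=
  (L.map fun q => genSeries q.1 q.2).foldr conv oneSeries

lemma magnus_eq_wordSeries (x : FreeGroup σ) : magnus x = wordSeries x.toWord := rfl

lemma wordSeries_cons (q : σ × Bool) (L : List (σ × Bool)) :
    wordSeries (q :: L) = conv (genSeries q.1 q.2) (wordSeries L) := rfl

lemma wordSeries_replicate_append_apply (m : ℕ) (x : σ) (b : Bool) (L : List (σ × Bool))
    {w : List σ} (hw : w.IsChain (· ≠ ·)) :
    wordSeries (replicate m (x, b) ++ L) w = wordSeries L w +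
      if w.head? = some x then m * (if b then 1 else -1) * wordSeries L w.tail else 0 := by
  induction m generalizing w with
  | zero => simp
  | succ m ih =>
    rw [replicate_succ, cons_append, wordSeries_cons, conv_genSeries_apply _ _ _ hw, ih hw,
      ih hw.tail]
    by_cases hx : w.head? = some x
    · simp only [hx, if_true, if_neg (hw.head?_tail_ne hx)]
      push_cast
      ring
    · simp [hx]

lemma wordSeries_blocksWord_cons_apply (x : σ) (n : ℤ) (bs : List (σ × ℤ)) {w : List σ}
    (hw : w.IsChain (· ≠ ·)) :
    wordSeries (blocksWord ((x, n) :: bs)) w = wordSeries (blocksWord bs) w +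
      if w.head? = some x then n * wordSeries (blocksWord bs) w.tail else 0 := by
  have hn : (n.natAbs : ℤ) * (if decide (0 < n) then 1 else -1) = n := by
    split_ifs <;> simp_all [abs_of_pos, abs_of_nonpos]
  rw [blocksWord, flatMap_cons, wordSeries_replicate_append_apply _ _ _ _ hw, hn]
  rfl

lemma wordSeries_blocksWord_apply_of_length_lt {bs : List (σ × ℤ)} {w : List σ}
    (hw : w.IsChain (· ≠ ·)) (hlen : bs.length < w.length) :
    wordSeries (blocksWord bs) w = 0 := by
  induction bs generalizing w with
  | nil =>
    obtain ⟨a, t, rfl⟩ := exists_cons_of_length_pos hlen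
    rfl
  | cons a bs ih =>
    rw [wordSeries_blocksWord_cons_apply _ _ _ hw, ih hw (by simp at hlen; omega),
      ih hw.tail (by simp at hlen ⊢; omega)]
    simp

lemma wordSeries_blocksWord_apply_map_fst {bs : List (σ × ℤ)}
    (hbs : (bs.map Prod.fst).IsChain (· ≠ ·)) :
    wordSeries (blocksWord bs) (bs.map Prod.fst) = (bs.map Prod.snd).prod := by
  induction bs with
  | nil => rfl
  | cons a bs ih =>
    obtain ⟨x, n⟩ := a
    simp only [map_cons] at hbs ⊢
    rw [wordSeries_blocksWord_cons_apply _ _ _ hbs,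
      wordSeries_blocksWord_apply_of_length_lt hbs (by simp), head?_cons,
      if_pos rfl, tail_cons, ih hbs.tail, zero_add, prod_cons]

theorem magnus_prod_zpow_apply_map_fst {bs : List (σ × ℤ)} (hn : ∀ a ∈ bs, a.2 ≠ 0)
    (hbs : (bs.map Prod.fst).IsChain (· ≠ ·)) :
    magnus (bs.map fun a => of a.1 ^ a.2).prod (bs.map Prod.fst) = (bs.map Prod.snd).prod := by
  rw [magnus_eq_wordSeries, prod_zpow_eq_mk_blocksWord, toWord_mk,
    (isReduced_blocksWord hn hbs).reduce_eq, wordSeries_blocksWord_apply_map_fst hbs]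

end Coefficients

/-- For a freely reduced nonempty word `w = x_{i_1}^{p_1} ⋯ x_{i_s}^{p_s}`
(all `p_j ≠ 0`, consecutive indices distinct), the coefficient of
`X_{i_1} ⋯ X_{i_s}` in `E(w)` is `p_1 ⋯ p_s ≠ 0`; in particular `E(w) ≠ 1`. -/
theorem magnus_reduced_word (r s : ℕ) (hs : 0 < s) (i : Fin s → Fin r)
    (p : Fin s → ℤ) (hp : ∀ j, p j ≠ 0)
    (hadj : ∀ (j : Fin s) (h : j.val + 1 < s), i j ≠ i ⟨j.val + 1, h⟩) :
    magnus ((List.ofFn fun j => FreeGroup.of (i j) ^ p j).prod) (List.ofFn i)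
        = ∏ j, p j ∧
      (∏ j, p j) ≠ 0 ∧
      magnus ((List.ofFn fun j => FreeGroup.of (i j) ^ p j).prod) ≠ oneSeries := by
  set bs := List.ofFn fun j => (i j, p j)
  have hfst : bs.map Prod.fst = List.ofFn i := by simp [bs, map_ofFn, Function.comp_def]
  have hword : (List.ofFn fun j => of (i j) ^ p j) = bs.map fun a => of a.1 ^ a.2 := by
    simp [bs, map_ofFn, Function.comp_def]
  have hcoef : magnus (List.ofFn fun j => of (i j) ^ p j).prod (List.ofFn i) = ∏ j, p j := by
    have hadj' : (bs.map Prod.fst).IsChain (· ≠ ·) := by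
      rw [hfst]
      exact isChain_ofFn.2 fun j hj => hadj ⟨j, by omega⟩ hj
    have hn : ∀ a ∈ bs, a.2 ≠ 0 := by simpa [bs] using hp
    rw [hword, ← hfst, magnus_prod_zpow_apply_map_fst hn hadj']
    simp [bs, map_ofFn, Function.comp_def, prod_ofFn]
  have hne : ∏ j, p j ≠ 0 := Finset.prod_ne_zero_iff.2 fun j _ => hp j
  refine ⟨hcoef, hne, fun h => hne ?_⟩
  rw [← hcoef, h, oneSeries, if_neg (by simpa using hs.ne')]
end
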